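/- arXiv:2401.07147 — 2 statements merged into one kernel-verified Lean document; each statement's English description precedes it below -/
import Mathlib

section
/- Let G ≤ Sym_n be a subgroup and let 𝒫 and 𝒫' be supporting partitions of G. Then E(𝒫,𝒫') is also a supporting partition of G. -/
/-- Binary strings of length `n`: the set `{0,1}ⁿ`. -/
abbrev Str (n : ℕ) := Fin n → Bool

/-- The action of `Sym_n` on strings, permuting positions: `(π·v)_i = v_{π⁻¹(i)}`. -/
def act {n : ℕ} (π : Equiv.Perm (Fin n)) (v : Str n) : Str n := fun i => v (π.symm i)

/-- The action of `Sym_n` on sets of strings. -/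
def actSet {n : ℕ} (π : Equiv.Perm (Fin n)) (C : Set (Str n)) : Set (Str n) := act π '' C

/-- The (setwise) stabiliser of a set of strings. -/
def setStab {n : ℕ} (C : Set (Str n)) : Set (Equiv.Perm (Fin n)) := {π | actSet π C = C}

/-- The orbit of a set of strings under `Sym_n`. -/
def setOrbit {n : ℕ} (C : Set (Str n)) : Set (Set (Str n)) := {D | ∃ π, D = actSet π C}

/-- An ordered partition of `{0,1}ⁿ`: a tuple of pairwise disjoint nonempty subsets
whose union is everything. -/
def IsOrderedPartition {n m : ℕ} (C : Fin m → Set (Str n)) : Prop :=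
  (∀ i, (C i).Nonempty) ∧ (Pairwise fun i j => Disjoint (C i) (C j)) ∧ (⋃ i, C i) = Set.univ

/-- The stabiliser of an ordered partition (componentwise). -/
def tupStab {n m : ℕ} (C : Fin m → Set (Str n)) : Set (Equiv.Perm (Fin n)) :=
  {π | ∀ i, actSet π (C i) = C i}

/-- The orbit of an ordered partition under the componentwise action of `Sym_n`. -/
def tupOrbit {n m : ℕ} (C : Fin m → Set (Str n)) : Set (Fin m → Set (Str n)) :=
  {D | ∃ π, D = fun i => actSet π (C i)}

/-- Pointwise stabiliser of a partition (setoid) of `[n]`: permutations fixing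
each part setwise. -/
def ptStab {n : ℕ} (s : Setoid (Fin n)) : Set (Equiv.Perm (Fin n)) :=
  {π | ∀ P ∈ s.classes, (π : Fin n → Fin n) '' P = P}

/-- Setwise stabiliser of a partition of `[n]`: permutations mapping parts to parts. -/
def swStab {n : ℕ} (s : Setoid (Fin n)) : Set (Equiv.Perm (Fin n)) :=
  {π | ∀ P ∈ s.classes, (π : Fin n → Fin n) '' P ∈ s.classes}

/-- A partition `s` of `[n]` is a supporting partition of `G` if its pointwise
stabiliser is contained in `G`. -/
def IsSupporting {n : ℕ} (G : Set (Equiv.Perm (Fin n))) (s : Setoid (Fin n)) : Prop :=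
  ∀ π ∈ ptStab s, π ∈ G

/-- `s` is as coarse as `t`: every part of `t` is contained in some part of `s`. -/
def AsCoarseAs {X : Type*} (s t : Setoid X) : Prop :=
  ∀ P ∈ t.classes, ∃ Q ∈ s.classes, P ⊆ Q

/-- `s` is the coarsest supporting partition of `G`. -/
def IsCoarsestSupp {n : ℕ} (G : Set (Equiv.Perm (Fin n))) (s : Setoid (Fin n)) : Prop :=
  IsSupporting G s ∧ ∀ t, IsSupporting G t → AsCoarseAs s t

/-- The intersection `⊓_{a ∈ A} f(a)` of a family of partitions: parts are the
nonempty intersections of parts. -/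
def interSetoid {X ι : Type*} (A : Set ι) (f : ι → Setoid X) : Setoid X where
  r x y := ∀ a ∈ A, (f a).r x y
  iseqv := ⟨fun x a _ => (f a).refl x,
            fun h a ha => (f a).symm (h a ha),
            fun h h' a ha => (f a).trans (h a ha) (h' a ha)⟩

/-- `SP(a)` for a string `a`: the partition of positions according to the bit of `a`. -/
def strSetoid {n : ℕ} (a : Str n) : Setoid (Fin n) where
  r k j := a k = a j
  iseqv := ⟨fun _ => rfl, Eq.symm, Eq.trans⟩

/-- `π ∈ Sym_n` realises a permutation `σ` of the parts of a partition `s` if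
`π(P) = σ(P)` for every part `P`. -/
def Realises {n : ℕ} (π : Equiv.Perm (Fin n)) {s : Setoid (Fin n)}
    (σ : Equiv.Perm s.classes) : Prop :=
  ∀ P : s.classes, (π : Fin n → Fin n) '' (P : Set (Fin n)) = ((σ P : Set (Fin n)))
/-- `E(s,t)`: the partition of `[n]` whose parts are the equivalence classes of the
transitive closure of the relation "`x` and `y` lie in a common part of `s` or of `t`"
(the finest partition as coarse as both `s` and `t`). -/
def Ejoin {X : Type*} (s t : Setoid X) : Setoid X where
  r := Relation.TransGen (fun x y => s.r x y ∨ t.r x y)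
  iseqv := by
    refine ⟨fun x => Relation.TransGen.single (Or.inl (s.refl x)), ?_, ?_⟩
    · intro x y h
      induction h with
      | single h => exact Relation.TransGen.single (h.imp s.symm t.symm)
      | tail _ h ih => exact Relation.TransGen.head (h.imp s.symm t.symm) ih
    · intro x y z h h'
      exact Relation.TransGen.trans h h'


/-!
A partition `e` supports a group `G` exactly when `G` contains every transposition `(x y)` with
`x, y` in a common part of `e`, because the pointwise stabiliser of `e` is generated by those
transpositions. Transpositions of `G` compose along chains: `(x y), (y z) ∈ G` give `(x z) ∈ G`.
Hence `G` contains the transposition of any two points joined by a chain of parts of `𝒫` and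
`𝒫'`, that is, of any two points in a common part of `E(𝒫, 𝒫')`.
-/

open Equiv Subgroup

section

variable {n : ℕ} {e : Setoid (Fin n)}

theorem mem_ptStab_iff {π : Perm (Fin n)} : π ∈ ptStab e ↔ ∀ x, e.r (π x) x := by
  constructor
  · intro hπ x
    have hx : π x ∈ (π : Fin n → Fin n) '' {z | e.r z x} := ⟨x, e.refl x, rfl⟩
    rwa [hπ _ (e.mem_classes x)] at hx
  · rintro hπ _ ⟨x, rfl⟩
    ext z
    refine ⟨?_, fun hz => ⟨π.symm z, ?_, π.apply_symm_apply z⟩⟩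
    · rintro ⟨w, hw, rfl⟩
      exact e.trans (hπ w) hw
    · have hz' := hπ (π.symm z)
      rw [π.apply_symm_apply] at hz'
      exact e.trans (e.symm hz') hz

theorem swap_mem_ptStab {x y : Fin n} (h : e.r x y) : swap x y ∈ ptStab e := by
  refine mem_ptStab_iff.mpr fun z => ?_
  rw [swap_apply_def]
  split_ifs with hzx hzy
  · exact hzx ▸ e.symm h
  · exact hzy ▸ h
  · exact e.refl z

theorem ptStab_subset_closure_swap :
    ptStab e ⊆ closure {σ | σ.IsSwap ∧ σ ∈ ptStab e} := by
  intro π hπ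
  refine (mem_closure_isSwap fun _ hσ => hσ.1).mpr ⟨Set.toFinite _, fun x => ?_⟩
  rw [← swap_mem_closure_isSwap fun _ hσ => hσ.1]
  by_cases hx : π x = x
  · rw [hx, swap_self]
    exact one_mem _
  · exact subset_closure ⟨⟨π x, x, hx, rfl⟩, swap_mem_ptStab (mem_ptStab_iff.mp hπ x)⟩

theorem isSupporting_iff_swap_mem (G : Subgroup (Perm (Fin n))) :
    IsSupporting (G : Set (Perm (Fin n))) e ↔ ∀ x y, e.r x y → swap x y ∈ G := by
  refine ⟨fun hG x y h => hG _ (swap_mem_ptStab h), fun hG π hπ => ?_⟩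
  refine closure_le G |>.mpr ?_ (ptStab_subset_closure_swap hπ)
  rintro _ ⟨⟨x, y, -, rfl⟩, hxy⟩
  have hyx := mem_ptStab_iff.mp hxy x
  rw [swap_apply_left] at hyx
  exact hG x y (e.symm hyx)

end

/-- if `𝒫` and `𝒫'` are supporting partitions of a subgroup `G ≤ Sym_n`,
then so is `E(𝒫,𝒫')`. -/
theorem stmt_3 {n : ℕ} (G : Subgroup (Equiv.Perm (Fin n))) (s t : Setoid (Fin n))
    (hs : IsSupporting (G : Set (Equiv.Perm (Fin n))) s)
    (ht : IsSupporting (G : Set (Equiv.Perm (Fin n))) t) :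
    IsSupporting (G : Set (Equiv.Perm (Fin n))) (Ejoin s t) := by
  rw [isSupporting_iff_swap_mem] at hs ht ⊢
  have hstep : ∀ x y, (s.r x y ∨ t.r x y) → swap x y ∈ G := by
    rintro x y (h | h)
    exacts [hs x y h, ht x y h]
  intro x y h
  induction h with
  | single h => exact hstep _ _ h
  | tail _ h ih => exact SubmonoidClass.swap_mem_trans G ih (hstep _ _ h)
end

section
/- Let (𝒫_n)_{n∈ℕ} be a sequence where each 𝒫_n is an ordered partition of {0,1}^n. Assume: (1) every v ∈ {0,1}^n occurs in some part of 𝒫_n; (2) there is a constant c > 0 such that, for all sufficiently large n, every part C of 𝒫_n satisfies |C| ≤ c·n; (3) there is a function f with f(n)/n → 0 such that, for all sufficiently large n, every part C of 𝒫_n satisfies |SP(C)| ≤ f(n) (the number of parts of the coarsest supporting partition of Stab_n(C) is at most f(n)). Then |Orbit_n(𝒫_n)| grows faster than any polynomial in 2^n; precisely, for every k ∈ ℕ and every real C > 0 there exists n with |Orbit_n(𝒫_n)| > C · 2^{k·n}. -/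
/-!
Orbit–stabiliser gives `n! = |Orbit_n(𝒫)| · |Stab_n(𝒫)|`, so it suffices to make the stabiliser
small. A permutation `π` is determined by its action on the `t = ⌈log₂ n⌉` strings `a_j` whose
entry at position `i` is the `j`-th binary digit of `i`. If `π` stabilises `𝒫`, then `π·a_j` stays
in the part containing `a_j`, which has at most `c·n` elements. Hence
`|Stab_n(𝒫)| ≤ (c·n)^t = 2^{O(log² n)}`, while `n!` eventually exceeds every `C·2^{(k+1)n}`.
-/

open Filter

lemma actSet_one {n : ℕ} (C : Set (Str n)) : actSet 1 C = C :=
  Set.image_id C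

lemma actSet_mul {n : ℕ} (π ρ : Equiv.Perm (Fin n)) (C : Set (Str n)) :
    actSet (π * ρ) C = actSet π (actSet ρ C) :=
  (Set.image_image (act π) (act ρ) C).symm

lemma act_mem_of_mem_tupStab {n m : ℕ} {P : Fin m → Set (Str n)} {π : Equiv.Perm (Fin n)}
    (hπ : π ∈ tupStab P) {i : Fin m} {v : Str n} (hv : v ∈ P i) : act π v ∈ P i :=
  hπ i ▸ Set.mem_image_of_mem _ hv

abbrev tupAction (n m : ℕ) : MulAction (Equiv.Perm (Fin n)) (Fin m → Set (Str n)) where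
  smul π D i := actSet π (D i)
  one_smul D := funext fun i => actSet_one (D i)
  mul_smul π ρ D := funext fun i => actSet_mul π ρ (D i)

section OrbitStabilizer

attribute [local instance] tupAction

variable {n m : ℕ}

lemma tupOrbit_eq_orbit (P : Fin m → Set (Str n)) :
    tupOrbit P = MulAction.orbit (Equiv.Perm (Fin n)) P := by
  ext D
  exact exists_congr fun _ => eq_comm

lemma tupStab_eq_stabilizer (P : Fin m → Set (Str n)) :
    tupStab P = MulAction.stabilizer (Equiv.Perm (Fin n)) P := by
  ext π
  exact funext_iff.symm

lemma ncard_tupStab_mul_ncard_tupOrbit (P : Fin m → Set (Str n)) :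
    (tupStab P).ncard * (tupOrbit P).ncard = n.factorial := by
  rw [tupOrbit_eq_orbit, ← MulAction.index_stabilizer, tupStab_eq_stabilizer,
    ← Nat.card_coe_set_eq, SetLike.coe_sort_coe, Subgroup.card_mul_index, Nat.card_perm,
    Nat.card_fin]

end OrbitStabilizer

lemma ncard_tupStab_le_pow {n m t B : ℕ} {P : Fin m → Set (Str n)}
    (hcover : ⋃ i, P i = Set.univ) (hB : ∀ i, (P i).ncard ≤ B) (a : Fin t → Str n)
    (ha : ∀ π ρ : Equiv.Perm (Fin n), (∀ j, act π (a j) = act ρ (a j)) → π = ρ) :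
    (tupStab P).ncard ≤ B ^ t := by
  choose part hpart using fun j => Set.mem_iUnion.1 (hcover ▸ Set.mem_univ (a j))
  let F : tupStab P → ∀ j, P (part j) := fun π j =>
    ⟨act π (a j), act_mem_of_mem_tupStab π.2 (hpart j)⟩
  have hF : Function.Injective F := fun π ρ h =>
    Subtype.ext (ha π ρ fun j => congrArg Subtype.val (congrFun h j))
  calc (tupStab P).ncard = Nat.card (tupStab P) := (Nat.card_coe_set_eq _).symm
    _ ≤ ∏ j, Nat.card (P (part j)) := (Nat.card_le_card_of_injective F hF).trans_eq Nat.card_pi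
    _ ≤ B ^ Finset.univ.card :=
      Finset.prod_le_pow_card _ _ B fun j _ => (Nat.card_coe_set_eq _).trans_le (hB _)
    _ = B ^ t := by rw [Finset.card_univ, Fintype.card_fin]

lemma eq_of_testBit_eq_of_lt_two_pow {x y t : ℕ} (hx : x < 2 ^ t) (hy : y < 2 ^ t)
    (h : ∀ j < t, x.testBit j = y.testBit j) : x = y := by
  refine Nat.eq_of_testBit_eq fun j => ?_
  by_cases hj : j < t
  · exact h j hj
  · have h2 : 2 ^ t ≤ 2 ^ j := Nat.pow_le_pow_right two_pos (not_lt.1 hj)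
    rw [Nat.testBit_eq_false_of_lt (hx.trans_le h2), Nat.testBit_eq_false_of_lt (hy.trans_le h2)]

def bitString (n j : ℕ) : Str n := fun i => (i : ℕ).testBit j

lemma eq_of_act_bitString_eq {n t : ℕ} (hn : n ≤ 2 ^ t) {π ρ : Equiv.Perm (Fin n)}
    (h : ∀ j : Fin t, act π (bitString n j) = act ρ (bitString n j)) : π = ρ := by
  have hsymm : π.symm = ρ.symm := Equiv.ext fun i => Fin.ext <|
    eq_of_testBit_eq_of_lt_two_pow ((π.symm i).2.trans_le hn) ((ρ.symm i).2.trans_le hn)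
      fun j hj => congrFun (h ⟨j, hj⟩) i
  simpa using congrArg Equiv.symm hsymm

lemma two_mul_sq_le_two_pow {s : ℕ} (hs : 7 ≤ s) : 2 * s ^ 2 ≤ 2 ^ s := by
  induction s, hs using Nat.le_induction with
  | base => norm_num
  | succ s hs ih => calc
    2 * (s + 1) ^ 2 ≤ 2 * (2 * s ^ 2) := by nlinarith
    _ ≤ 2 * 2 ^ s := by omega
    _ = 2 ^ (s + 1) := (pow_succ' 2 s).symm

lemma ncard_tupStab_le_two_pow {m a s : ℕ} {P : Fin m → Set (Str (2 ^ s))}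
    (hcover : ⋃ i, P i = Set.univ) (hB : ∀ i, (P i).ncard ≤ 2 ^ (a + s)) (has : a ≤ s)
    (hs : 7 ≤ s) : (tupStab P).ncard ≤ 2 ^ 2 ^ s := calc
  _ ≤ (2 ^ (a + s)) ^ s :=
    ncard_tupStab_le_pow hcover hB _ fun _ _ => eq_of_act_bitString_eq le_rfl
  _ = 2 ^ ((a + s) * s) := (pow_mul _ _ _).symm
  _ ≤ 2 ^ 2 ^ s := Nat.pow_le_pow_right two_pos <| calc
    (a + s) * s ≤ 2 * s ^ 2 := by nlinarith
    _ ≤ 2 ^ s := two_mul_sq_le_two_pow hs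

lemma eventually_mul_pow_lt_factorial (C x : ℝ) :
    ∀ᶠ n : ℕ in atTop, C * x ^ n < n.factorial := by
  have h := (FloorSemiring.tendsto_pow_div_factorial_atTop x).const_mul C
  rw [mul_zero] at h
  filter_upwards [h.eventually_lt_const one_pos] with n hn
  rwa [← mul_div_assoc, div_lt_one (by positivity)] at hn

theorem stmt_6_general
    (m : ℕ → ℕ) (P : ∀ n, Fin (m n) → Set (Str n))
    (hpart : ∀ n, IsOrderedPartition (P n))
    (c : ℝ)
    (hbound : ∃ N, ∀ n ≥ N, ∀ i, ((P n i).ncard : ℝ) ≤ c * n) :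
    ∀ (k : ℕ) (C : ℝ), 0 < C → ∃ n, C * (2 : ℝ) ^ (k * n) < ((tupOrbit (P n)).ncard : ℝ) := by
  intro k C _
  obtain ⟨N, hN⟩ := hbound
  obtain ⟨a, ha⟩ := pow_unbounded_of_one_lt c one_lt_two
  obtain ⟨M, hM⟩ := eventually_atTop.1 (eventually_mul_pow_lt_factorial C (2 ^ (k + 1)))
  set s := max (max N M) (max a 7)
  set n := 2 ^ s
  have hsn : s ≤ n := Nat.lt_two_pow_self.le
  have hparts : ∀ i, (P n i).ncard ≤ 2 ^ (a + s) := fun i => by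
    have : ((P n i).ncard : ℝ) ≤ 2 ^ (a + s) := calc
      _ ≤ c * n := hN n (by omega) i
      _ ≤ 2 ^ a * 2 ^ s := by
        push_cast [n]
        exact mul_le_mul_of_nonneg_right ha.le (by positivity)
      _ = 2 ^ (a + s) := (pow_add _ _ _).symm
    exact_mod_cast this
  have hstab : (tupStab (P n)).ncard ≤ 2 ^ n :=
    ncard_tupStab_le_two_pow (hpart n).2.2 hparts (by omega) (by omega)
  have horbit : (n.factorial : ℝ) ≤ 2 ^ n * (tupOrbit (P n)).ncard := by
    rw [← ncard_tupStab_mul_ncard_tupOrbit]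
    exact_mod_cast Nat.mul_le_mul_right _ hstab
  refine ⟨n, lt_of_mul_lt_mul_left (a := (2 : ℝ) ^ n) ?_ (by positivity)⟩
  calc (2 : ℝ) ^ n * (C * 2 ^ (k * n)) = C * (2 ^ (k + 1)) ^ n := by ring
    _ < n.factorial := hM n (by omega)
    _ ≤ _ := horbit

/-- if `(𝒫_n)` is a sequence of ordered partitions of `{0,1}ⁿ` with all
parts of size `≤ c·n` and all coarsest supporting partitions `SP(C)` with at most
`f(n) ∈ o(n)` parts (for sufficiently large `n`), then `|Orbit_n(𝒫_n)|` grows faster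
than any polynomial in `2ⁿ`. -/
theorem stmt_6
    (m : ℕ → ℕ) (P : ∀ n, Fin (m n) → Set (Str n))
    (hpart : ∀ n, IsOrderedPartition (P n))
    (sp : ∀ n, Fin (m n) → Setoid (Fin n))
    (hsp : ∀ n i, IsCoarsestSupp (setStab (P n i)) (sp n i))
    (c : ℝ) (hc : 0 < c)
    (hbound : ∃ N, ∀ n ≥ N, ∀ i, ((P n i).ncard : ℝ) ≤ c * n)
    (f : ℕ → ℕ)
    (hf : Filter.Tendsto (fun n => (f n : ℝ) / n) Filter.atTop (nhds 0))
    (hspbound : ∃ N, ∀ n ≥ N, ∀ i, (sp n i).classes.ncard ≤ f n) :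
    ∀ (k : ℕ) (C : ℝ), 0 < C → ∃ n, C * (2 : ℝ) ^ (k * n) < ((tupOrbit (P n)).ncard : ℝ) :=
  stmt_6_general m P hpart c hbound
end
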